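/- Let se_CQS(α) = 2 + 2h(α) (classic Quickselect, partitioning cost coefficient 1) and se_YQS(α) = (4/3)(3/2 + h(α)). Then se_CQS(α) − se_YQS(α) = (2/3)·h(α), and this difference is strictly positive for all α ∈ (0,1), attaining its maximum value (2/3)ln 2 at α = 1/2. -/
import Mathlib

/-- The binary base-e entropy function. -/
noncomputable def binEnt (x : ℝ) : ℝ := -x * Real.log x - (1 - x) * Real.log (1 - x)

lemma binEnt_eq (x : ℝ) : binEnt x = Real.binEntropy x := by
  unfold binEnt Real.binEntropy
  rw [Real.log_inv, Real.log_inv]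
  ring

/-- Scanned elements: with `se_CQS(α) = 2 + 2h(α)` and `se_YQS(α) = (4/3)(3/2 + h(α))`,
the difference equals `(2/3)h(α)`, is strictly positive on `(0,1)`, and attains its
maximum value `(2/3)ln 2` at `α = 1/2`. -/
theorem cqs_minus_yqs_scanned_elements :
    (∀ α ∈ Set.Ioo (0:ℝ) 1,
        (2 + 2 * binEnt α) - (4 / 3) * (3 / 2 + binEnt α) = (2 / 3) * binEnt α
        ∧ 0 < (2 + 2 * binEnt α) - (4 / 3) * (3 / 2 + binEnt α)) ∧
    (∀ α ∈ Set.Ioo (0:ℝ) 1,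
        (2 + 2 * binEnt α) - (4 / 3) * (3 / 2 + binEnt α) ≤ (2 / 3) * Real.log 2) ∧
    (2 + 2 * binEnt (1/2)) - (4 / 3) * (3 / 2 + binEnt (1/2)) = (2 / 3) * Real.log 2 := by
  refine ⟨fun α hα => ⟨by ring, ?_⟩, fun α hα => ?_, ?_⟩
  · have := Real.binEntropy_pos hα.1 hα.2
    rw [← binEnt_eq] at this
    nlinarith
  · have := Real.binEntropy_le_log_two (p := α)
    rw [← binEnt_eq] at this
    nlinarith
  · rw [binEnt_eq, show (1:ℝ)/2 = 2⁻¹ by norm_num, Real.binEntropy_two_inv]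
    ring
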